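/- The trajectory embedding x ↦ ev_x intertwines F with the Koopman linear system: for every x, ev_{F x} = Φ (ev_x). Consequently, if x has least period N ≥ 1 under iteration of F (F^[N] x = x and no smaller positive iterate fixes x), then ev_x has least period exactly N under iteration of Φ: Φ^[N] (ev_x) = ev_x and no M with 1 ≤ M < N satisfies Φ^[M] (ev_x) = ev_x. In particular every period of a closed orbit of F is a period of a closed orbit of the Koopman linear system. -/
import Mathlib


/-- The dual (Koopman) linear map `F* : V →ₗ V`, `φ ↦ φ ∘ F`, on the `ZMod 2`-vector space
`V` of all functions `(Fin n → ZMod 2) → ZMod 2`. -/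
def dualMap (n : ℕ) (F : (Fin n → ZMod 2) → (Fin n → ZMod 2)) :
    ((Fin n → ZMod 2) → ZMod 2) →ₗ[ZMod 2] ((Fin n → ZMod 2) → ZMod 2) where
  toFun φ := φ ∘ F
  map_add' _ _ := rfl
  map_smul' _ _ := rfl

/-- `W`, the smallest `F*`-invariant subspace of `V` containing all coordinate functions
`χ_i : x ↦ x i`: the span of `{(F*)^k χ_i : k ≥ 0, i : Fin n}`. -/
def Wspace (n : ℕ) (F : (Fin n → ZMod 2) → (Fin n → ZMod 2)) :
    Submodule (ZMod 2) ((Fin n → ZMod 2) → ZMod 2) :=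
  Submodule.span (ZMod 2)
    {ψ | ∃ (k : ℕ) (i : Fin n), ψ = ((dualMap n F) ^ k) (fun x => x i)}

/-- The evaluation functional `ev_x : W →ₗ ZMod 2`, `w ↦ w x`. -/
def ev (n : ℕ) (F : (Fin n → ZMod 2) → (Fin n → ZMod 2)) (x : Fin n → ZMod 2) :
    Module.Dual (ZMod 2) (Wspace n F) where
  toFun w := (w : (Fin n → ZMod 2) → ZMod 2) x
  map_add' _ _ := rfl
  map_smul' _ _ := rfl

/-- The Koopman linear system `Φ` on `Module.Dual (ZMod 2) W`: `φ ↦ φ ∘ₗ F₁`, where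
`F₁` is the restriction of `F*` to `W`. -/
def Koop (n : ℕ) (F : (Fin n → ZMod 2) → (Fin n → ZMod 2))
    (hW : ∀ v ∈ Wspace n F, dualMap n F v ∈ Wspace n F) :
    Module.Dual (ZMod 2) (Wspace n F) → Module.Dual (ZMod 2) (Wspace n F) :=
  fun φ => φ ∘ₗ (dualMap n F).restrict hW

/-- The trajectory embedding `x ↦ ev_x` intertwines `F` with the Koopman
linear system: `ev_{F x} = Φ (ev_x)`. Consequently, if `x` has least period `N ≥ 1` under
iteration of `F`, then `ev_x` has least period exactly `N` under iteration of `Φ`. -/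
theorem koopman_embedding_preserves_least_period (n : ℕ) (hn : 0 < n)
    (F : (Fin n → ZMod 2) → (Fin n → ZMod 2))
    (hW : ∀ v ∈ Wspace n F, dualMap n F v ∈ Wspace n F) :
    (∀ x : Fin n → ZMod 2, ev n F (F x) = Koop n F hW (ev n F x)) ∧
    (∀ (x : Fin n → ZMod 2) (N : ℕ), 1 ≤ N → F^[N] x = x →
      (∀ M : ℕ, 1 ≤ M → M < N → F^[M] x ≠ x) →
      (Koop n F hW)^[N] (ev n F x) = ev n F x ∧
      (∀ M : ℕ, 1 ≤ M → M < N → (Koop n F hW)^[M] (ev n F x) ≠ ev n F x)) := by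
  have hint : ∀ x : Fin n → ZMod 2, ev n F (F x) = Koop n F hW (ev n F x) := by
    intro x; ext w; rfl
  have hiter : ∀ (M : ℕ) (x : Fin n → ZMod 2),
      (Koop n F hW)^[M] (ev n F x) = ev n F (F^[M] x) := by
    intro M
    induction M with
    | zero => intro x; rfl
    | succ M ih =>
      intro x
      rw [Function.iterate_succ_apply', Function.iterate_succ_apply', ih, ← hint]
  have hinj : ∀ y x : Fin n → ZMod 2, ev n F y = ev n F x → y = x := by
    intro y x h
    funext i
    have hmem : (fun z : Fin n → ZMod 2 => z i) ∈ Wspace n F :=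
      Submodule.subset_span ⟨0, i, by simp⟩
    exact congrArg (fun φ : Module.Dual (ZMod 2) (Wspace n F) => φ ⟨_, hmem⟩) h
  refine ⟨hint, fun x N _ hN hmin => ⟨?_, fun M h1 h2 hM => ?_⟩⟩
  · rw [hiter, hN]
  · exact hmin M h1 h2 (hinj _ _ (by rw [← hiter]; exact hM))
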